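/- Let n ≥ 2 and let x_1,…,x_n,y_1,…,y_{n−1} be distinct elements with {x_1,…,x_n} ∪ {y_1,…,y_{n−1}} = {1,…,2n−1}. Let u be the bijective tableau of shape (2^{n−1},1) with first column (x_1,…,x_n) (top to bottom) and second column (y_1,…,y_{n−1}), and for 1 ≤ i ≤ n let s_i be the tableau with first column (y_1,…,y_{n−1},x_i) and second column (x_1,…,x̂_i,…,x_n) (x_i omitted). Then the polytabloid identity ε_u = Σ_{i=1}^n (−1)^{n−i} ε_{s_i} holds in the permutation module M^{(2^{n−1},1)}; that is, the image under the polytabloid map of the generalized Jacobi identity holds in the Specht module S^{(2^{n−1},1)}. -/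

import Mathlib

open Finset

/-- Number of inversions of a list. -/
def invCount {α : Type*} [LinearOrder α] (l : List α) : ℕ :=
  (Finset.univ.filter
    (fun p : Fin l.length × Fin l.length => p.1 < p.2 ∧ l.get p.2 < l.get p.1)).card

/-- The sign `(-1)^(number of inversions)` of the permutation sorting a list
with pairwise distinct entries into increasing order. -/
noncomputable def invSign {α : Type*} [LinearOrder α] (l : List α) : ℂ :=
  (-1) ^ invCount l

/-- Replace the entry `a` by `b` (in place) in a list. -/
def replaceOne {α : Type*} [DecidableEq α] (l : List α) (a b : α) : List α :=
  l.map fun z => if z = a then b else z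

open scoped Classical in
/-- Dirac delta: the basis vector corresponding to an index `r`. -/
noncomputable def delta {β : Type*} (r : β) : β → ℂ := fun r' => if r' = r then 1 else 0

/-- Index for the basis of ordered column tabloids of shape `(2^m, 1^{n-m})` on
`{1, …, n+m}` (identified with `Fin (n+m)`): such a tabloid is recorded by the
set `T` of entries of its first column (the second column is the complement). -/
abbrev Col (n m : ℕ) := {T : Finset (Fin (n + m)) // T.card = n}

/-- The space `M̃` of column tabloids of shape `(2^m, 1^{n-m})`. -/
abbrev Mt (n m : ℕ) := Col n m → ℂ

lemma card_compl' {n m : ℕ} (T : Col n m) : (T.1ᶜ).card = m := by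
  rw [Finset.card_compl, T.2, Fintype.card_fin]
  omega

/-- `yel T j` is the `(j+1)`-st smallest element of the complement of `T`
(i.e. of the second column). -/
noncomputable def yel {n m : ℕ} (T : Col n m) (j : Fin m) : Fin (n + m) :=
  (T.1ᶜ).orderEmbOfFin (card_compl' T) j

lemma yel_not_mem {n m : ℕ} (T : Col n m) (j : Fin m) : yel T j ∉ T.1 :=
  Finset.mem_compl.mp (Finset.orderEmbOfFin_mem (T.1ᶜ) (card_compl' T) j)

/-- The first column obtained from `T` after exchanging `x ∈ T` with the
`(j+1)`-st smallest element of the complement. -/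
noncomputable def swapSet {n m : ℕ} (T : Col n m) (x : Fin (n + m)) (j : Fin m) :
    Finset (Fin (n + m)) :=
  insert (yel T j) (T.1.erase x)

lemma swapSet_card {n m : ℕ} (T : Col n m) {x : Fin (n + m)} (hx : x ∈ T.1) (j : Fin m) :
    (swapSet T x j).card = n := by
  have h0 : 0 < n := T.2 ▸ Finset.card_pos.mpr ⟨x, hx⟩
  rw [swapSet, Finset.card_insert_of_notMem
      (fun h => yel_not_mem T j (Finset.mem_of_mem_erase h)),
    Finset.card_erase_of_mem hx, T.2]
  omega

/-- `swap_{x,j}(T)`: the signed basis vector obtained from `T` by exchanging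
`x` (in the first column) with the `(j+1)`-st entry of the second column in
place, the sign `ε` being the product of the signs of the two permutations
re-sorting the two columns. -/
noncomputable def swapTerm {n m : ℕ} (T : Col n m) (x : {a // a ∈ T.1}) (j : Fin m) :
    Mt n m :=
  (invSign (replaceOne (T.1.sort (· ≤ ·)) x.1 (yel T j)) *
      invSign (replaceOne ((T.1ᶜ).sort (· ≤ ·)) (yel T j) x.1)) •
    delta (⟨swapSet T x.1 j, swapSet_card T x.2 j⟩ : Col n m)

/-- The operator `η` on the basis vector `v_T`. -/
noncomputable def etaBasis {n m : ℕ} (T : Col n m) : Mt n m :=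
  (m : ℂ) • delta T - ∑ j : Fin m, ∑ x ∈ T.1.attach, swapTerm T x j

/-- The operator `η : M̃ → M̃`, extended linearly from the basis. -/
noncomputable def etaFun {n m : ℕ} (f : Mt n m) : Mt n m :=
  ∑ T : Col n m, f T • etaBasis T

/-- `η` as a linear map. -/
noncomputable def etaLin (n m : ℕ) : Mt n m →ₗ[ℂ] Mt n m where
  toFun := etaFun
  map_add' f g := by
    simp [etaFun, add_smul, Finset.sum_add_distrib]
  map_smul' c f := by
    simp [etaFun, Finset.smul_sum, smul_smul]

/-- The sign picked up when re-sorting the two columns after relabelling by `σ`. -/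
noncomputable def actSign {n m : ℕ} (σ : Equiv.Perm (Fin (n + m))) (T : Col n m) : ℂ :=
  invSign ((T.1.sort (· ≤ ·)).map ⇑σ) * invSign (((T.1ᶜ).sort (· ≤ ·)).map ⇑σ)

lemma image_card {n m : ℕ} (σ : Equiv.Perm (Fin (n + m))) (T : Col n m) :
    (T.1.image ⇑σ).card = n := by
  rw [Finset.card_image_of_injective _ σ.injective, T.2]

/-- The (signed) action of `S_{n+m}` on the space of column tabloids:
`σ • v_T = sgn(sort₁) sgn(sort₂) v_{σ(T)}`, extended linearly. -/
noncomputable def act {n m : ℕ} (σ : Equiv.Perm (Fin (n + m))) (f : Mt n m) : Mt n m :=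
  ∑ T : Col n m, f T •
    (actSign σ T • delta (⟨T.1.image ⇑σ, image_card σ T⟩ : Col n m))

section SpechtSide

variable (γ : Type*) [Fintype γ] [DecidableEq γ] (p q : ℕ)

/-- A bijective Young tableau of the two-column shape with column lengths
`p` (first column) and `q` (second column), with entries in `γ`:
a bijection from the cells to the entries. -/
abbrev Tabl := (Fin p ⊕ Fin q) ≃ γ

/-- `rows` is a row tabloid of shape `(2^q, 1^{p-q})`: the first `q` rows are
unordered pairs, the remaining rows singletons, all pairwise disjoint
(together they then necessarily partition `γ`). -/
def IsRowTab (rows : Fin p → Finset γ) : Prop :=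
  (∀ i, (rows i).card = if (i : ℕ) < q then 2 else 1) ∧
  ∀ i j, i ≠ j → Disjoint (rows i) (rows j)

/-- Row tabloids of shape `(2^q, 1^{p-q})`. -/
abbrev RowTab := {rows : Fin p → Finset γ // IsRowTab γ p q rows}

/-- The permutation module `M^{(2^q,1^{p-q})}`, with basis the row tabloids. -/
abbrev MP := RowTab γ p q → ℂ

variable {γ p q}

/-- The rows of a tableau. -/
def rowsOf (t : Tabl γ p q) : Fin p → Finset γ := fun i =>
  if h : (i : ℕ) < q then {t (Sum.inl i), t (Sum.inr ⟨(i : ℕ), h⟩)}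
  else {t (Sum.inl i)}

lemma mem_rowsOf {t : Tabl γ p q} {i : Fin p} {a : γ} (ha : a ∈ rowsOf t i) :
    a = t (Sum.inl i) ∨ ∃ h : (i : ℕ) < q, a = t (Sum.inr ⟨(i : ℕ), h⟩) := by
  unfold rowsOf at ha
  split_ifs at ha with h
  · rcases Finset.mem_insert.mp ha with h1 | h1
    · exact Or.inl h1
    · exact Or.inr ⟨h, Finset.mem_singleton.mp h1⟩
  · exact Or.inl (Finset.mem_singleton.mp ha)

lemma isRowTab_rowsOf (t : Tabl γ p q) : IsRowTab γ p q (rowsOf t) := by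
  constructor
  · intro i
    by_cases h : (i : ℕ) < q
    · rw [rowsOf, dif_pos h, if_pos h]
      exact Finset.card_pair (t.injective.ne (by simp))
    · rw [rowsOf, dif_neg h, if_neg h]
      exact Finset.card_singleton _
  · intro i j hij
    rw [Finset.disjoint_left]
    intro a ha hb
    rcases mem_rowsOf ha with h1 | ⟨hi, h1⟩ <;> rcases mem_rowsOf hb with h2 | ⟨hj, h2⟩
    · exact hij (Sum.inl.inj (t.injective (h1.symm.trans h2)))
    · exact absurd (t.injective (h1.symm.trans h2)) (by simp)
    · exact absurd (t.injective (h1.symm.trans h2)) (by simp)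
    · refine hij (Fin.ext ?_)
      have h3 := Sum.inr.inj (t.injective (h1.symm.trans h2))
      simpa using congrArg Fin.val h3

/-- The row tabloid `{t}` of a tableau `t`. -/
def rowTabOf (t : Tabl γ p q) : RowTab γ p q := ⟨rowsOf t, isRowTab_rowsOf t⟩

/-- The column stabilizer `C_t` of a tableau: permutations preserving each
column setwise. -/
def colStab (t : Tabl γ p q) : Finset (Equiv.Perm γ) :=
  Finset.univ.filter fun σ =>
    (∀ i : Fin p, ∃ i' : Fin p, σ (t (Sum.inl i)) = t (Sum.inl i')) ∧
    (∀ j : Fin q, ∃ j' : Fin q, σ (t (Sum.inr j)) = t (Sum.inr j'))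

/-- The polytabloid `ε_t = ∑_{β ∈ C_t} sgn(β) {β t}`. -/
noncomputable def polytab (t : Tabl γ p q) : MP γ p q :=
  ∑ σ ∈ colStab t, ((Equiv.Perm.sign σ : ℤ) : ℂ) • delta (rowTabOf (t.trans σ))

variable (γ p q) in
/-- The Specht module `S^{(2^q,1^{p-q})}`: the span of all polytabloids. -/
noncomputable def SpechtMod : Submodule ℂ (MP γ p q) :=
  Submodule.span ℂ (Set.range (polytab (γ := γ) (p := p) (q := q)))

/-- The entrywise action of a permutation on a row tabloid. -/
def rowAct (σ : Equiv.Perm γ) (r : RowTab γ p q) : RowTab γ p q :=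
  ⟨fun i => (r.1 i).image ⇑σ, by
    obtain ⟨h1, h2⟩ := r.2
    refine ⟨fun i => ?_, fun i j hij => ?_⟩
    · rw [Finset.card_image_of_injective _ σ.injective]; exact h1 i
    · exact (Finset.disjoint_image σ.injective).mpr (h2 i j hij)⟩

/-- The entrywise `S_N`-action on the permutation module. -/
noncomputable def actP (σ : Equiv.Perm γ) (f : MP γ p q) : MP γ p q :=
  fun r => f (rowAct σ⁻¹ r)

end SpechtSide

/-- The tableau `t(T)` whose first column is `T` in increasing order and whose
second column is the complement of `T` in increasing order. -/
noncomputable def tabOf {n m : ℕ} (T : Col n m) : Tabl (Fin (n + m)) n m :=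
  Equiv.ofBijective
    (Sum.elim (fun i => T.1.orderEmbOfFin T.2 i)
      (fun j => (T.1ᶜ).orderEmbOfFin (card_compl' T) j))
    (by
      rw [Fintype.bijective_iff_injective_and_card]
      refine ⟨?_, by simp⟩
      rintro (i | i) (j | j) h <;> simp only [Sum.elim_inl, Sum.elim_inr] at h
      · exact congrArg Sum.inl ((T.1.orderEmbOfFin T.2).injective h)
      · have h1 := Finset.orderEmbOfFin_mem T.1 T.2 i
        have h2 := Finset.orderEmbOfFin_mem (T.1ᶜ) (card_compl' T) j
        rw [h] at h1
        simp only [Finset.mem_compl] at h2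
        exact absurd h1 h2
      · have h1 := Finset.orderEmbOfFin_mem T.1 T.2 j
        have h2 := Finset.orderEmbOfFin_mem (T.1ᶜ) (card_compl' T) i
        rw [← h] at h1
        simp only [Finset.mem_compl] at h2
        exact absurd h1 h2
      · exact congrArg Sum.inr (((T.1ᶜ).orderEmbOfFin (card_compl' T)).injective h))

/-- The `S_N`-equivariant map `α : M̃ → M^{(2^m,1^{n-m})}`, sending `v_T` to the
polytabloid `ε_{t(T)}` (its image is the Specht module). -/
noncomputable def alphaLin (n m : ℕ) : Mt n m →ₗ[ℂ] MP (Fin (n + m)) n m where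
  toFun f := ∑ T : Col n m, f T • polytab (tabOf T)
  map_add' f g := by simp [add_smul, Finset.sum_add_distrib]
  map_smul' c f := by simp [Finset.smul_sum, smul_smul]

/-- `φ(v_T)`, encoding the generalized Jacobi identity (for shape `(2^{n-1},1)`,
i.e. `n = m + 1`):
`φ(v_T) = v_T − ∑_{i=1}^n (−1)^{n−i} sgn(c_i) v_{Tᶜ ∪ {x_i}}` where
`x_i` is the `i`-th smallest element of `T` and `c_i` sorts `(y_1,…,y_{n−1},x_i)`. -/
noncomputable def phiBasis {n m : ℕ} (h : n = m + 1) (T : Col n m) : Mt n m :=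
  delta T - ∑ i : Fin n,
    ((-1 : ℂ) ^ (n - 1 - (i : ℕ)) *
        invSign ((T.1ᶜ).sort (· ≤ ·) ++ [T.1.orderEmbOfFin T.2 i])) •
      delta (⟨insert (T.1.orderEmbOfFin T.2 i) T.1ᶜ, by
        rw [Finset.card_insert_of_notMem (by
            simpa using Finset.orderEmbOfFin_mem T.1 T.2 i),
          card_compl']
        omega⟩ : Col n m)

/-- The map `φ : M̃ → M̃`, extended linearly; `ker φ ≅ ρ_{n,3}`. -/
noncomputable def phiFun {n m : ℕ} (h : n = m + 1) (f : Mt n m) : Mt n m :=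
  ∑ T : Col n m, f T • phiBasis h T

/-- `φ` as a linear map. -/
noncomputable def phiLin (n m : ℕ) (h : n = m + 1) : Mt n m →ₗ[ℂ] Mt n m where
  toFun := phiFun h
  map_add' f g := by simp [phiFun, add_smul, Finset.sum_add_distrib]
  map_smul' c f := by simp [phiFun, Finset.smul_sum, smul_smul]

/-!
Expand every polytabloid over its column group `S_n × S_{n-1}`. In the term of `ε_{s_i}` indexed
by `(a, b)`, merge `i` and the permutation `b` of the second column into one permutation `c` of
`{1,…,n}` sending the last position to `i` (so `sgn c = (-1)^(n-i) sgn b`); the right-hand side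
becomes a sum over pairs `(a, c)`. If `a` moves the bottom cell of the first column, which holds
`x_{c(n)}`, into row `j < n`, then `c` and `c · (j n)` give the same row tabloid with opposite
signs, so these terms cancel. The surviving `a` fix the bottom cell, i.e. permute the `y`'s, and
what remains is precisely the expansion of `ε_u`.
-/

open Equiv Equiv.Perm

namespace Fin

variable {m : ℕ}

def succAbovePerm (i : Fin (m + 1)) (b : Perm (Fin m)) : Perm (Fin (m + 1)) :=
  (finSuccEquiv' (last m)).trans (b.optionCongr.trans (finSuccEquiv' i).symm)

@[simp]
lemma succAbovePerm_last (i : Fin (m + 1)) (b : Perm (Fin m)) :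
    succAbovePerm i b (last m) = i := by
  simp [succAbovePerm]

@[simp]
lemma succAbovePerm_castSucc (i : Fin (m + 1)) (b : Perm (Fin m)) (j : Fin m) :
    succAbovePerm i b (castSucc j) = i.succAbove (b j) := by
  simp [succAbovePerm, finSuccEquiv'_last_apply_castSucc]

lemma succAbovePerm_eq_cycleRange_inv_mul (i : Fin (m + 1)) (b : Perm (Fin m)) :
    succAbovePerm i b = (cycleRange i)⁻¹ * finRotate (m + 1) * succAbovePerm (last m) b := by
  ext k
  induction k using lastCases with
  | last => simp [Perm.inv_def]
  | cast j => simp [finRotate_apply, coeSucc_eq_succ, Perm.inv_def]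

lemma sign_succAbovePerm (i : Fin (m + 1)) (b : Perm (Fin m)) :
    sign (succAbovePerm i b) = (-1) ^ (m - i) * sign b := by
  have hlast : sign (succAbovePerm (last m) b) = sign b := by
    rw [← optionCongr_sign b, ← sign_permCongr (finSuccEquiv' (last m)).symm]
    rfl
  have hexp : (i : ℕ) + m = (m - i) + 2 * i := by omega
  rw [succAbovePerm_eq_cycleRange_inv_mul, map_mul, map_mul, hlast, sign_inv, sign_cycleRange,
    sign_finRotate, ← pow_add, add_tsub_cancel_right, hexp, pow_add, pow_mul]
  simp

lemma bijective_succAbovePerm :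
    Function.Bijective fun ib : Fin (m + 1) × Perm (Fin m) => succAbovePerm ib.1 ib.2 := by
  rw [Fintype.bijective_iff_injective_and_card]
  refine ⟨?_, by simp [Fintype.card_perm, Nat.factorial_succ]⟩
  rintro ⟨i, b⟩ ⟨i', b'⟩ h
  obtain rfl : i = i' := by simpa using DFunLike.congr_fun h (last m)
  have hb : b = b' := Equiv.ext fun j => succAbove_right_injective (p := i) (by
    simpa using DFunLike.congr_fun h (castSucc j))
  rw [hb]

lemma sum_perm_eq_sum_succAbovePerm {M : Type*} [AddCommMonoid M]
    (f : Perm (Fin (m + 1)) → M) : ∑ c, f c = ∑ i, ∑ b, f (succAbovePerm i b) := by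
  rw [← Fintype.sum_prod_type']
  exact (bijective_succAbovePerm.sum_comp f).symm

lemma snoc_comp_succAbovePerm_last {γ : Type*} (y : Fin m → γ) (z : γ) (b : Perm (Fin m)) :
    (snoc y z : Fin (m + 1) → γ) ∘ succAbovePerm (last m) b = snoc (y ∘ b) z := by
  funext k
  induction k using lastCases <;> simp

end Fin

lemma Equiv.Perm.sum_eq_zero_of_mul_swap {α M : Type*} [DecidableEq α] [Fintype α]
    [AddCommGroup M] {i j : α} (hij : i ≠ j) (f : Perm α → M)
    (hf : ∀ c, f (c * swap i j) = -f c) : ∑ c, f c = 0 := by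
  refine Finset.sum_ninvolution (fun c => c * swap i j) (fun c => by rw [hf, add_neg_cancel])
    (fun c _ => ?_) (fun _ => Finset.mem_univ _) (fun c => by simp [mul_assoc])
  simpa [swap_eq_one_iff] using hij

section Columns

variable {γ : Type*} [DecidableEq γ] {p q : ℕ}

def rowsOfColumns (f : Fin p → γ) (g : Fin q → γ) : Fin p → Finset γ := fun i =>
  if h : (i : ℕ) < q then {f i, g ⟨i, h⟩} else {f i}

open scoped Classical in
/-- The basis vector of the row tabloid with rows `r`, and `0` if `r` is not a row tabloid. -/
noncomputable def rowsIndicator (r : Fin p → Finset γ) : MP γ p q :=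
  fun R => if R.1 = r then 1 else 0

/-- A polytabloid for arbitrary, not necessarily bijective, column fillings `f` and `g`: this keeps
bijectivity out of the Jacobi computation. -/
noncomputable def polytabOfColumns (f : Fin p → γ) (g : Fin q → γ) : MP γ p q :=
  ∑ a : Perm (Fin p), ∑ b : Perm (Fin q),
    (sign a * sign b) • rowsIndicator (rowsOfColumns (f ∘ a) (g ∘ b))

variable [Fintype γ]

lemma delta_rowTabOf (t : Tabl γ p q) : delta (rowTabOf t) = rowsIndicator (rowsOf t) := by
  funext R
  simp only [delta, rowsIndicator, Subtype.ext_iff]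
  rfl

lemma mem_colStab_iff {t : Tabl γ p q} {σ : Perm γ} :
    σ ∈ colStab t ↔ ∃ a b, t.permCongr (Perm.sumCongr a b) = σ := by
  simp only [colStab, Finset.mem_filter, Finset.mem_univ, true_and]
  constructor
  · rintro ⟨hl, -⟩
    have hmaps : Set.MapsTo (t.symm.permCongr σ) (Set.range Sum.inl) (Set.range Sum.inl) := by
      rintro _ ⟨i, rfl⟩
      obtain ⟨i', hi'⟩ := hl i
      exact ⟨i', by simp [permCongr_apply, hi']⟩
    obtain ⟨⟨a, b⟩, hab⟩ := mem_sumCongrHom_range_of_perm_mapsTo_inl hmaps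
    refine ⟨a, b, ?_⟩
    rw [sumCongrHom_apply] at hab
    rw [hab]
    ext z
    simp [permCongr_apply]
  · rintro ⟨a, b, rfl⟩
    exact ⟨fun i => ⟨a i, by simp [permCongr_apply]⟩,
      fun j => ⟨b j, by simp [permCongr_apply]⟩⟩

theorem polytab_eq_polytabOfColumns (t : Tabl γ p q) :
    polytab t = polytabOfColumns (t ∘ Sum.inl) (t ∘ Sum.inr) := by
  rw [polytab, polytabOfColumns, ← Fintype.sum_prod_type']
  symm
  refine Finset.sum_bij (fun ab _ => t.permCongr (Perm.sumCongr ab.1 ab.2))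
    (fun ab _ => mem_colStab_iff.2 ⟨ab.1, ab.2, rfl⟩) ?_ ?_ ?_
  · rintro ⟨a, b⟩ - ⟨a', b'⟩ - h
    exact sumCongrHom_injective (α := Fin p) (β := Fin q) ((permCongr t).injective h)
  · intro σ hσ
    obtain ⟨a, b, rfl⟩ := mem_colStab_iff.1 hσ
    exact ⟨(a, b), Finset.mem_univ _, rfl⟩
  · rintro ⟨a, b⟩ -
    have htrans : t.trans (t.permCongr (Perm.sumCongr a b)) = (Perm.sumCongr a b).trans t := by
      ext z
      simp [permCongr_apply]
    rw [htrans, sign_permCongr, sign_sumCongr, delta_rowTabOf, Units.smul_def,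
      Int.cast_smul_eq_zsmul]
    rfl

end Columns

section Jacobi

variable {γ : Type*} [DecidableEq γ] {m : ℕ}

lemma rowsOfColumns_snoc_init (f : Fin (m + 1) → γ) (g : Fin m → γ) :
    rowsOfColumns (Fin.snoc g (f (Fin.last m)) : Fin (m + 1) → γ) (Fin.init f) =
      rowsOfColumns f g := by
  funext k
  induction k using Fin.lastCases with
  | last => simp [rowsOfColumns]
  | cast j => simp [rowsOfColumns, Fin.init, Finset.pair_comm]

lemma rowsOfColumns_swap (X : Fin (m + 1) → γ) (y : Fin m → γ) (a : Perm (Fin (m + 1)))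
    {j : Fin (m + 1)} (hj : a j = Fin.last m) (hjl : j ≠ Fin.last m) :
    rowsOfColumns (Fin.snoc y (X j) ∘ a : Fin (m + 1) → γ)
        (Fin.init (X ∘ swap j (Fin.last m))) =
      rowsOfColumns (Fin.snoc y (X (Fin.last m)) ∘ a : Fin (m + 1) → γ) (Fin.init X) := by
  have hne : ∀ k, k ≠ j → a k ≠ Fin.last m :=
    fun k hk h => hk (a.injective (h.trans hj.symm))
  have hsnoc : ∀ k, k ≠ j → ∀ z z' : γ,
      (Fin.snoc y z : Fin (m + 1) → γ) (a k) = (Fin.snoc y z' : Fin (m + 1) → γ) (a k) :=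
    fun k hk z z' => by
      obtain ⟨l, hl⟩ := Fin.exists_castSucc_eq.2 (hne k hk)
      simp [← hl]
  funext k
  induction k using Fin.lastCases with
  | last => simp [rowsOfColumns, hsnoc _ hjl.symm (X j) (X (Fin.last m))]
  | cast l =>
    by_cases hl : Fin.castSucc l = j
    · subst hl
      simp [rowsOfColumns, Fin.init, hj, Finset.pair_comm]
    · simp [rowsOfColumns, Fin.init, hsnoc _ hl (X j) (X (Fin.last m)),
        swap_apply_of_ne_of_ne hl (Fin.castSucc_ne_last l)]

/-- The term indexed by `(a, b)` in the expansion of `(-1)^(m-i) ε_{s_i}`, written in terms of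
`c = Fin.succAbovePerm i b`. -/
noncomputable def jacobiTerm (x : Fin (m + 1) → γ) (y : Fin m → γ)
    (a c : Perm (Fin (m + 1))) : MP γ (m + 1) m :=
  (sign a * sign c) • rowsIndicator
    (rowsOfColumns (Fin.snoc y (x (c (Fin.last m))) ∘ a : Fin (m + 1) → γ)
      (Fin.init (x ∘ c)))

variable (x : Fin (m + 1) → γ) (y : Fin m → γ)

lemma smul_polytabOfColumns_eq_sum_jacobiTerm (i : Fin (m + 1)) :
    (-1 : ℂ) ^ (m - (i : ℕ)) •
        polytabOfColumns (Fin.snoc y (x i) : Fin (m + 1) → γ) (x ∘ i.succAbove) =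
      ∑ a, ∑ b, jacobiTerm x y a (Fin.succAbovePerm i b) := by
  have hsign : (-1 : ℂ) ^ (m - (i : ℕ)) = (((-1 : ℤˣ) ^ (m - (i : ℕ)) : ℤˣ) : ℤ) := by
    push_cast
    rfl
  rw [polytabOfColumns, hsign, Int.cast_smul_eq_zsmul, ← Units.smul_def, Finset.smul_sum]
  refine Finset.sum_congr rfl fun a _ => ?_
  rw [Finset.smul_sum]
  refine Finset.sum_congr rfl fun b _ => ?_
  have hcol : (x ∘ i.succAbove) ∘ b = Fin.init (x ∘ Fin.succAbovePerm i b) := by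
    funext j
    simp [Fin.init]
  simp only [jacobiTerm, Fin.sign_succAbovePerm, Fin.succAbovePerm_last, smul_smul, hcol,
    mul_left_comm]

lemma sum_jacobiTerm_eq_zero {a : Perm (Fin (m + 1))} (ha : a (Fin.last m) ≠ Fin.last m) :
    ∑ c, jacobiTerm x y a c = 0 := by
  have hj : a (a.symm (Fin.last m)) = Fin.last m := a.apply_symm_apply _
  have hjl : a.symm (Fin.last m) ≠ Fin.last m := fun h => ha (by rw [← h, hj, h])
  refine sum_eq_zero_of_mul_swap hjl _ fun c => ?_
  simp only [jacobiTerm, Perm.mul_apply, swap_apply_right, map_mul, sign_swap hjl, mul_neg,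
    mul_one, Units.neg_smul, Perm.coe_mul, ← Function.comp_assoc]
  exact congrArg (fun r => -((sign a * sign c) • rowsIndicator r))
    (rowsOfColumns_swap (x ∘ c) y a hj hjl)

lemma jacobiTerm_succAbovePerm_last (b : Perm (Fin m)) (c : Perm (Fin (m + 1))) :
    jacobiTerm x y (Fin.succAbovePerm (Fin.last m) b) c =
      (sign c * sign b) • rowsIndicator (rowsOfColumns (x ∘ c) (y ∘ b)) := by
  simp only [jacobiTerm, Fin.sign_succAbovePerm, Fin.val_last, Nat.sub_self, pow_zero, one_mul,
    Fin.snoc_comp_succAbovePerm_last]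
  rw [mul_comm]
  exact congrArg (fun r => (sign c * sign b) • rowsIndicator r)
    (rowsOfColumns_snoc_init (x ∘ c) (y ∘ b))

theorem polytabOfColumns_jacobi :
    polytabOfColumns x y = ∑ i : Fin (m + 1), (-1 : ℂ) ^ (m - (i : ℕ)) •
      polytabOfColumns (Fin.snoc y (x i) : Fin (m + 1) → γ) (x ∘ i.succAbove) := by
  calc polytabOfColumns x y
      = ∑ b, ∑ c, jacobiTerm x y (Fin.succAbovePerm (Fin.last m) b) c := by
        rw [polytabOfColumns, Finset.sum_comm]
        simp only [jacobiTerm_succAbovePerm_last]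
    _ = ∑ i, ∑ b, ∑ c, jacobiTerm x y (Fin.succAbovePerm i b) c :=
        (Fintype.sum_eq_single (Fin.last m) fun i hi =>
          Finset.sum_eq_zero fun b _ => sum_jacobiTerm_eq_zero x y (by simpa using hi)).symm
    _ = ∑ a, ∑ c, jacobiTerm x y a c :=
        (Fin.sum_perm_eq_sum_succAbovePerm fun a => ∑ c, jacobiTerm x y a c).symm
    _ = ∑ a, ∑ i, ∑ b, jacobiTerm x y a (Fin.succAbovePerm i b) :=
        Finset.sum_congr rfl fun a _ => Fin.sum_perm_eq_sum_succAbovePerm (jacobiTerm x y a)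
    _ = ∑ i, ∑ a, ∑ b, jacobiTerm x y a (Fin.succAbovePerm i b) := Finset.sum_comm
    _ = _ := Finset.sum_congr rfl fun i _ => (smul_polytabOfColumns_eq_sum_jacobiTerm x y i).symm

end Jacobi

/-- The image of the generalized Jacobi identity under the
polytabloid map holds in the Specht module `S^{(2^{n-1},1)}`: if `u` is the
bijective tableau of shape `(2^{n-1},1)` with first column `(x_1,…,x_n)` and
second column `(y_1,…,y_{n-1})`, and `s_i` is the tableau with first column
`(y_1,…,y_{n-1},x_i)` and second column `(x_1,…,x̂_i,…,x_n)`, then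
`ε_u = ∑_{i=1}^n (-1)^{n-i} ε_{s_i}`. -/
theorem jacobi_identity_in_specht (n : ℕ) (hn : 2 ≤ n)
    (x : Fin n → Fin (2 * n - 1)) (y : Fin (n - 1) → Fin (2 * n - 1))
    (u : Tabl (Fin (2 * n - 1)) n (n - 1))
    (hu : ∀ z, u z = Sum.elim x y z)
    (s : Fin n → Tabl (Fin (2 * n - 1)) n (n - 1))
    (hs1 : ∀ (i : Fin n) (j : Fin n),
      s i (Sum.inl j) = if h : (j : ℕ) < n - 1 then y ⟨(j : ℕ), h⟩ else x i)
    (hs2 : ∀ (i : Fin n) (j : Fin (n - 1)),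
      s i (Sum.inr j) =
        x ⟨if (j : ℕ) < (i : ℕ) then (j : ℕ) else (j : ℕ) + 1, by
          have hj := j.2; split <;> omega⟩) :
    polytab u = ∑ i : Fin n, (-1 : ℂ) ^ (n - 1 - (i : ℕ)) • polytab (s i) := by
  obtain ⟨m, rfl⟩ : ∃ m, n = m + 1 := ⟨n - 1, by omega⟩
  have hu_cols : u ∘ Sum.inl = x ∧ u ∘ Sum.inr = y :=
    ⟨funext fun _ => hu _, funext fun _ => hu _⟩
  have hs_cols : ∀ i,
      s i ∘ Sum.inl = Fin.snoc y (x i) ∧ s i ∘ Sum.inr = x ∘ i.succAbove := by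
    intro i
    refine ⟨funext fun j => ?_, funext fun j => ?_⟩
    · induction j using Fin.lastCases <;> simp [hs1]
    · rw [Function.comp_apply, hs2, Function.comp_apply, Fin.succAbove]
      congr 1
      split_ifs <;> simp_all [Fin.ext_iff, Fin.lt_def]
  rw [polytab_eq_polytabOfColumns, hu_cols.1, hu_cols.2, polytabOfColumns_jacobi]
  refine Finset.sum_congr rfl fun i _ => ?_
  rw [polytab_eq_polytabOfColumns, (hs_cols i).1, (hs_cols i).2]
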